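/- For each n and a ∈ ℝ the quantity U_n(a) := sup{ E_P[u_n(X^n+Y)] : Y ∈ L^1(Q̂), E_{Q̂}[Y] ≤ a, u_n(X^n+Y) P-integrable } is a real number, and for every a = (a^1,…,a^N) ∈ ℝ^N with Σ_{n=1}^N a^n = A one has Σ_{n=1}^N U_n(a^n) ≤ Σ_{n=1}^N E_P[u_n(X^n+Ŷ^n)]. -/

import Mathlib

/-!
Under the pricing measure `Q̂`, which is `P` exponentially tilted by `-X̄/β`, Jensen's inequality
bounds every agent's value: if `E_Q̂[Y] ≤ a` then
`E_P[exp(-α(X + Y))] = E · E_Q̂[exp(-α(X + Y) + X̄/β)] ≥ E · exp(-α(a + E_Q̂[X]) + E_Q̂[X̄]/β)`,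
while the constant `Y = a` is admissible, so the value is a real number. Minimising the sum of
these bounds under `∑ aⁿ = A` is a finite-dimensional convex problem, settled by the tangent-line
inequality `exp x ≥ exp c · (1 + x - c)`. Its value is attained by `Ŷ`, which makes every exposure
`-αₙ(Xⁿ + Ŷⁿ) = -X̄/β + cₙ` a shift of the same aggregate risk.
-/

open MeasureTheory ProbabilityTheory Real

namespace EReal

lemma coe_finset_sum {ι : Type*} (s : Finset ι) (f : ι → ℝ) :
    ((∑ i ∈ s, f i : ℝ) : EReal) = ∑ i ∈ s, (f i : EReal) :=
  map_sum (⟨⟨Real.toEReal, coe_zero⟩, coe_add⟩ : ℝ →+ EReal) f s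

lemma exists_eq_coe_of_coe_le_of_le_coe {e : EReal} {x y : ℝ} (hx : (x : EReal) ≤ e)
    (hy : e ≤ y) : ∃ r : ℝ, e = r :=
  ⟨e.toReal, (coe_toReal (ne_top_of_le_ne_top (coe_ne_top y) hy)
    (ne_bot_of_le_ne_bot (coe_ne_bot x) hx)).symm⟩

end EReal

lemma sum_exp_le_sum_exp_of_sum_mul_sub_eq_zero {ι : Type*} (s : Finset ι) {c x : ι → ℝ}
    (h : ∑ i ∈ s, exp (c i) * (x i - c i) = 0) :
    ∑ i ∈ s, exp (c i) ≤ ∑ i ∈ s, exp (x i) :=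
  calc ∑ i ∈ s, exp (c i) = ∑ i ∈ s, exp (c i) * (x i - c i + 1) := by
        simp only [mul_add_one, Finset.sum_add_distrib, h, zero_add]
    _ ≤ ∑ i ∈ s, exp (x i) := Finset.sum_le_sum fun i _ => by
        rw [← add_sub_cancel (c i) (x i), exp_add, add_sub_cancel_left]
        exact mul_le_mul_of_nonneg_left (add_one_le_exp _) (exp_pos _).le

lemma sum_exp_le_sum_exp_neg_mul {ι : Type*} [Fintype ι] {α b : ι → ℝ} (hα : ∀ i, 0 < α i)
    {β ER : ℝ} (hβ : β = ∑ i, (α i)⁻¹) (hβ0 : β ≠ 0)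
    (hER : ER = ∑ i, (α i)⁻¹ / β * log (α i)) :
    ∑ i, exp (ER - (∑ j, b j) / β - log (α i)) ≤ ∑ i, exp (-(α i * b i)) := by
  -- the left side is the value at the minimiser `bᵢ = ((∑ j, b j) / β + log αᵢ - ER) / αᵢ`
  refine sum_exp_le_sum_exp_of_sum_mul_sub_eq_zero _ ?_
  have hexp : ∀ i, exp (ER - (∑ j, b j) / β - log (α i)) = exp (ER - (∑ j, b j) / β) * (α i)⁻¹ :=
    fun i => by rw [exp_sub _ (log _), exp_log (hα i), div_eq_mul_inv]
  have hterm : ∀ i, (α i)⁻¹ * (-(α i * b i) - (ER - (∑ j, b j) / β - log (α i)))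
      = -b i + (α i)⁻¹ * ((∑ j, b j) / β - ER) + (α i)⁻¹ / β * log (α i) * β := fun i => by
    field_simp [(hα i).ne']
    ring
  simp_rw [hexp, mul_assoc, ← Finset.mul_sum, hterm, Finset.sum_add_distrib, ← Finset.sum_mul,
    ← hβ, ← hER, Finset.sum_neg_distrib]
  field_simp
  ring

section Tilting

variable {Ω : Type*} [MeasurableSpace Ω] {μ : Measure Ω}

lemma integrable_exp_mul_of_integrable_exp_mul_abs {X : Ω → ℝ} (hX : AEMeasurable X μ)
    (h : ∀ a : ℝ, 0 < a → Integrable (fun ω => exp (a * |X ω|)) μ) (t : ℝ) :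
    Integrable (fun ω => exp (t * X ω)) μ := by
  refine (h (|t| + 1) (by positivity)).mono (by fun_prop) (ae_of_all _ fun ω => ?_)
  simp only [norm_eq_abs, abs_exp, exp_le_exp]
  calc t * X ω ≤ |t| * |X ω| := (le_abs_self _).trans (abs_mul _ _).le
    _ ≤ (|t| + 1) * |X ω| := by gcongr; linarith

lemma integrable_exp_mul_add_mul {f g : Ω → ℝ} (hf : AEMeasurable f μ) (hg : AEMeasurable g μ)
    (hf_exp : ∀ t, Integrable (fun ω => exp (t * f ω)) μ)
    (hg_exp : ∀ t, Integrable (fun ω => exp (t * g ω)) μ) (s t : ℝ) :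
    Integrable (fun ω => exp (s * f ω + t * g ω)) μ := by
  refine ((hf_exp (2 * s)).add (hg_exp (2 * t))).mono (by fun_prop) (ae_of_all _ fun ω => ?_)
  have hpos : 0 ≤ exp (s * f ω) * exp (t * g ω) := by positivity
  have hsq := two_mul_le_add_sq (exp (s * f ω)) (exp (t * g ω))
  simp only [norm_eq_abs, abs_exp, Pi.add_apply, ← exp_nat_mul] at hsq ⊢
  rw [abs_of_nonneg (by positivity), exp_add, mul_assoc, mul_assoc]
  push_cast at hsq
  linarith

lemma integrable_exp_mul_sum [IsFiniteMeasure μ] {ι : Type*} (s : Finset ι) {X : ι → Ω → ℝ}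
    (hX : ∀ i, AEMeasurable (X i) μ) (hX_exp : ∀ i t, Integrable (fun ω => exp (t * X i ω)) μ)
    (t : ℝ) : Integrable (fun ω => exp (t * ∑ i ∈ s, X i ω)) μ := by
  classical
  induction s using Finset.induction_on generalizing t with
  | empty => simp
  | insert j s hj ih =>
    simp only [Finset.sum_insert hj, mul_add]
    exact integrable_exp_mul_add_mul (hX j) (Finset.aemeasurable_fun_sum _ fun i _ => hX i)
      (hX_exp j) ih t t

lemma integrable_tilted_of_integrable_exp_mul {w X : Ω → ℝ} (hw : AEMeasurable w μ)
    (hX : AEMeasurable X μ) (hw_exp : ∀ t, Integrable (fun ω => exp (t * w ω)) μ)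
    (hX_exp : ∀ t, Integrable (fun ω => exp (t * X ω)) μ) : Integrable X (μ.tilted w) := by
  have hw_exp' : Integrable (fun ω => exp (w ω)) μ := by simpa using hw_exp 1
  refine integrable_of_mem_interior_integrableExpSet ?_
  suffices integrableExpSet X (μ.tilted w) = Set.univ by simp [this]
  ext t
  simpa [integrableExpSet, integrable_tilted_iff hw_exp', ← exp_add] using
    integrable_exp_mul_add_mul hw hX hw_exp hX_exp 1 t

lemma mul_exp_integral_tilted_le_integral_exp [NeZero μ] {w f : Ω → ℝ}
    (hw : Integrable (fun ω => exp (w ω)) μ) (hf : Integrable (fun ω => exp (f ω)) μ)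
    (hfw : Integrable (fun ω => f ω - w ω) (μ.tilted w)) :
    (∫ ω, exp (w ω) ∂μ) * exp (∫ ω, f ω - w ω ∂μ.tilted w) ≤ ∫ ω, exp (f ω) ∂μ := by
  have := isProbabilityMeasure_tilted hw
  have hjensen : exp (∫ ω, f ω - w ω ∂μ.tilted w) ≤ ∫ ω, exp (f ω - w ω) ∂μ.tilted w :=
    convexOn_exp.map_integral_le continuousOn_exp isClosed_univ
      (ae_of_all _ fun _ => Set.mem_univ _) hfw
      (by simpa [Function.comp_def, integrable_tilted_iff hw, ← exp_add] using hf)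
  rw [integral_exp_tilted] at hjensen
  rw [← le_div_iff₀' (integral_exp_pos hw)]
  simpa using hjensen

/-- The value `Uₙ(a)` of an agent with utility `1 - exp (-α x)` facing the prices `Q`. -/
noncomputable def expUtilityValue (μ Q : Measure Ω) (α : ℝ) (X : Ω → ℝ) (a : ℝ) : EReal :=
  sSup {s : EReal | ∃ Y : Ω → ℝ, Integrable Y Q ∧ (∫ ω, Y ω ∂Q) ≤ a ∧
    Integrable (fun ω => 1 - exp (-(α * (X ω + Y ω)))) μ ∧
    s = ((∫ ω, 1 - exp (-(α * (X ω + Y ω))) ∂μ : ℝ) : EReal)}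

lemma le_expUtilityValue {Q : Measure Ω} [IsFiniteMeasure μ] [IsProbabilityMeasure Q]
    {α : ℝ} {X : Ω → ℝ} (hX : Integrable (fun ω => exp (-α * X ω)) μ) (a : ℝ) :
    ((∫ ω, 1 - exp (-(α * (X ω + a))) ∂μ : ℝ) : EReal) ≤ expUtilityValue μ Q α X a := by
  refine le_sSup ⟨fun _ => a, integrable_const a, by simp, ?_, rfl⟩
  refine (integrable_const 1).sub ?_
  simpa [mul_add, exp_add, mul_comm] using hX.const_mul (exp (-(α * a)))

lemma expUtilityValue_tilted_le [IsProbabilityMeasure μ] {w X : Ω → ℝ} {α : ℝ}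
    (hα : 0 ≤ α) (hw : Integrable (fun ω => exp (w ω)) μ) (hwQ : Integrable w (μ.tilted w))
    (hX : Integrable X (μ.tilted w)) (a : ℝ) :
    expUtilityValue μ (μ.tilted w) α X a ≤
      ((1 - (∫ ω, exp (w ω) ∂μ) * exp (-∫ ω, w ω ∂μ.tilted w) *
        exp (-(α * (a + ∫ ω, X ω ∂μ.tilted w))) : ℝ) : EReal) := by
  refine sSup_le ?_
  rintro _ ⟨Y, hY, hYa, hu, rfl⟩
  have hexp : Integrable (fun ω => exp (-(α * (X ω + Y ω)))) μ := by
    refine ((integrable_const 1).sub hu).congr (ae_of_all _ fun ω => ?_)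
    simp
  have hXY : Integrable (fun ω => -(α * (X ω + Y ω))) (μ.tilted w) :=
    ((hX.add hY).const_mul α).neg
  have hgibbs := mul_exp_integral_tilted_le_integral_exp hw hexp (hXY.sub hwQ)
  rw [integral_sub hXY hwQ, integral_neg, integral_const_mul, integral_add hX hY] at hgibbs
  rw [EReal.coe_le_coe_iff, integral_sub (integrable_const 1) hexp, integral_const]
  simp only [probReal_univ, one_smul, sub_le_sub_iff_left]
  refine le_trans ?_ hgibbs
  rw [mul_assoc, ← exp_add]
  gcongr
  linarith [mul_le_mul_of_nonneg_left hYa hα]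

lemma exists_expUtilityValue_tilted_eq_coe [IsProbabilityMeasure μ] {w X : Ω → ℝ}
    {α : ℝ} (hα : 0 ≤ α) (hw : Integrable (fun ω => exp (w ω)) μ)
    (hwQ : Integrable w (μ.tilted w)) (hX : Integrable X (μ.tilted w))
    (hX_exp : Integrable (fun ω => exp (-α * X ω)) μ) (a : ℝ) :
    ∃ r : ℝ, expUtilityValue μ (μ.tilted w) α X a = r :=
  have := isProbabilityMeasure_tilted hw
  EReal.exists_eq_coe_of_coe_le_of_le_coe (le_expUtilityValue hX_exp a)
    (expUtilityValue_tilted_le hα hw hwQ hX a)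

lemma sum_expUtilityValue_tilted_le [IsProbabilityMeasure μ] {ι : Type*}
    [Fintype ι] {α : ι → ℝ} (hα : ∀ i, 0 < α i) {β ER A : ℝ} (hβ : β = ∑ i, (α i)⁻¹)
    (hβ0 : β ≠ 0) (hER : ER = ∑ i, (α i)⁻¹ / β * log (α i)) {X : ι → Ω → ℝ} {w : Ω → ℝ}
    (hw : ∀ ω, w ω = -((∑ i, X i ω) / β)) (hw_exp : Integrable (fun ω => exp (w ω)) μ)
    (hwQ : Integrable w (μ.tilted w)) (hX : ∀ i, Integrable (X i) (μ.tilted w))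
    {a : ι → ℝ} (ha : ∑ i, a i = A) :
    ∑ i, expUtilityValue μ (μ.tilted w) (α i) (X i) (a i) ≤
      ((∑ i, (1 - (∫ ω, exp (w ω) ∂μ) * exp (ER - A / β - log (α i))) : ℝ) : EReal) := by
  set q : ι → ℝ := fun i => ∫ ω, X i ω ∂μ.tilted w
  set C := (∫ ω, exp (w ω) ∂μ) * exp (-∫ ω, w ω ∂μ.tilted w) with hC
  have hC0 : 0 ≤ C := mul_nonneg (integral_nonneg fun _ => (exp_pos _).le) (exp_pos _).le
  have hwQ_int : -∫ ω, w ω ∂μ.tilted w = (∑ i, q i) / β := by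
    simp [hw, integral_neg, integral_div, integral_finsetSum _ fun i _ => hX i]
    rfl
  calc ∑ i, expUtilityValue μ (μ.tilted w) (α i) (X i) (a i)
      ≤ ∑ i, ((1 - C * exp (-(α i * (a i + q i))) : ℝ) : EReal) :=
        Finset.sum_le_sum fun i _ => expUtilityValue_tilted_le (hα i).le hw_exp hwQ (hX i) (a i)
    _ ≤ ((∑ i, (1 - C * exp (ER - (∑ j, (a j + q j)) / β - log (α i))) : ℝ) : EReal) := by
      rw [← EReal.coe_finset_sum, EReal.coe_le_coe_iff]
      simp only [Finset.sum_sub_distrib, ← Finset.mul_sum]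
      exact sub_le_sub_left
        (mul_le_mul_of_nonneg_left (sum_exp_le_sum_exp_neg_mul hα hβ hβ0 hER) hC0) _
    _ = _ := by
      congr 2 with i
      rw [hC, Finset.sum_add_distrib, ha, mul_assoc, ← exp_add, hwQ_int]
      ring_nf

end Tilting

/-- Condition 2 of a SORTE for `B = C_ℝ` in the exponential case: the single-agent
    value functions `Uₙ(a)` (w.r.t. the equilibrium pricing measure `Q̂`) are finite
    real numbers, and the allocation `âⁿ := E_{Q̂}[Ŷⁿ]` is optimal for the systemic
    problem `S^{Q̂}(A)`: for every `a ∈ ℝ^N` with `Σₙ aⁿ = A` one has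
    `Σₙ Uₙ(aⁿ) ≤ Σₙ E_P[uₙ(Xⁿ+Ŷⁿ)]`. -/
theorem exponential_systemic_allocation_optimal
    {Ω : Type*} [MeasurableSpace Ω] (P : Measure Ω) [IsProbabilityMeasure P]
    (N : ℕ) (hN : 1 ≤ N) (A : ℝ)
    (α : Fin N → ℝ) (hα : ∀ n, 0 < α n)
    (u : Fin N → ℝ → ℝ) (hu : ∀ n x, u n x = 1 - Real.exp (-(α n * x)))
    (X : Fin N → Ω → ℝ) (hXmeas : ∀ n, Measurable (X n))
    (hXexp : ∀ n, ∀ a : ℝ, 0 < a → Integrable (fun ω => Real.exp (a * |X n ω|)) P)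
    (β : ℝ) (hβ : β = ∑ n, (α n)⁻¹)
    (Xbar : Ω → ℝ) (hXbar : ∀ ω, Xbar ω = ∑ n, X n ω)
    (ER : ℝ) (hER : ER = ∑ n, ((α n)⁻¹ / β) * Real.log (α n))
    (E : ℝ) (hE : E = ∫ ω, Real.exp (-(Xbar ω / β)) ∂P)
    (Qhat : Measure Ω)
    (hQhat : Qhat = P.withDensity (fun ω => ENNReal.ofReal (Real.exp (-(Xbar ω / β)) / E)))
    (Yhat : Fin N → Ω → ℝ)
    (hYhat : ∀ k ω, Yhat k ω
      = -X k ω + Xbar ω / (α k * β) + (α k)⁻¹ * (A / β + Real.log (α k) - ER))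
    (U : Fin N → ℝ → EReal)
    (hU : ∀ n a, U n a = sSup {s : EReal | ∃ Y : Ω → ℝ, Integrable Y Qhat ∧
      (∫ ω, Y ω ∂Qhat) ≤ a ∧ Integrable (fun ω => u n (X n ω + Y ω)) P ∧
      s = ((∫ ω, u n (X n ω + Y ω) ∂P : ℝ) : EReal)}) :
    (∀ n (a : ℝ), ∃ s : ℝ, U n a = (s : EReal)) ∧
    (∀ a : Fin N → ℝ, (∑ n, a n) = A →
      (∑ n, U n (a n)) ≤ ((∑ n, ∫ ω, u n (X n ω + Yhat n ω) ∂P : ℝ) : EReal)) := by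
  have hβpos : 0 < β :=
    hβ ▸ Finset.sum_pos (fun n _ => inv_pos.2 (hα n)) ⟨⟨0, hN⟩, Finset.mem_univ _⟩
  have hXm : ∀ n, AEMeasurable (X n) P := fun n => (hXmeas n).aemeasurable
  have hX_exp : ∀ n t, Integrable (fun ω => exp (t * X n ω)) P := fun n =>
    integrable_exp_mul_of_integrable_exp_mul_abs (hXm n) (hXexp n)
  obtain rfl : Xbar = fun ω => ∑ n, X n ω := funext hXbar
  set w : Ω → ℝ := fun ω => -((∑ n, X n ω) / β)
  have hwm : AEMeasurable w P :=
    ((Finset.aemeasurable_fun_sum _ fun n _ => hXm n).div_const β).neg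
  have hw_exp : ∀ t, Integrable (fun ω => exp (t * w ω)) P := fun t => by
    convert integrable_exp_mul_sum Finset.univ hXm hX_exp (-t / β) using 3
    ring
  have hQ : Qhat = P.tilted w := by rw [hQhat, hE]; rfl
  have hU' : ∀ n a, U n a = expUtilityValue P (P.tilted w) (α n) (X n) a := by
    simp only [hU, hu, hQ, expUtilityValue, implies_true]
  have hwQ := integrable_tilted_of_integrable_exp_mul hwm hwm hw_exp hw_exp
  have hXQ n := integrable_tilted_of_integrable_exp_mul hwm (hXm n) hw_exp (hX_exp n)
  have hw_exp' : Integrable (fun ω => exp (w ω)) P := by simpa using hw_exp 1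
  have hYhat_val : ∀ n, ∫ ω, u n (X n ω + Yhat n ω) ∂P
      = 1 - E * exp (ER - A / β - log (α n)) := by
    intro n
    have hpt : ∀ ω, u n (X n ω + Yhat n ω) = 1 - exp (ER - A / β - log (α n)) * exp (w ω) := by
      intro ω
      simp only [hu, hYhat, w, ← exp_add]
      congr 2
      field_simp [(hα n).ne']
      ring
    simp_rw [hpt]
    rw [integral_sub (integrable_const _) (hw_exp'.const_mul _), integral_const_mul, ← hE]
    simp [mul_comm]
  refine ⟨fun n a => hU' n a ▸ exists_expUtilityValue_tilted_eq_coe (hα n).le hw_exp' hwQ (hXQ n)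
    (by simpa using hX_exp n (-α n)) a, fun a ha => ?_⟩
  simp only [hU', hYhat_val, hE]
  exact sum_expUtilityValue_tilted_le hα hβ hβpos.ne' hER (fun _ => rfl) hw_exp' hwQ hXQ ha
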